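/- arXiv:math/0410130 — 3 statements merged into one kernel-verified Lean document; each statement's English description precedes it below -/
import Mathlib

section
/- The pair (A, α) is an H-module coalgebra: for all h, h' ∈ H and a ∈ A, (i) α(h h' ⊗ a) = α(h ⊗ α(h' ⊗ a)); (ii) α(1_H ⊗ a) = a; (iii) ε_A(α(h ⊗ a)) = ε_H(h)·ε_A(a); (iv) Δ_A(α(h ⊗ a)) = Σ α(h₁ ⊗ a₁) ⊗ α(h₂ ⊗ a₂). -/
open TensorProduct

noncomputable section

universe u

variable {k A H X : Type u} [Field k]
  [Ring A] [Ring H] [Ring X]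
  [Bialgebra k A] [Bialgebra k H] [Bialgebra k X]

/-- ζ : H ⊗ A → A ⊗ H, ζ(h ⊗ a) = ξ⁻¹(j_H(h) · j_A(a)). -/
def zetaF (jA : A →ₐc[k] X) (jH : H →ₐc[k] X) (ξ : (A ⊗[k] H) ≃ₗ[k] X) :
    H ⊗[k] A →ₗ[k] A ⊗[k] H :=
  ξ.symm.toLinearMap ∘ₗ LinearMap.mul' k X ∘ₗ
    TensorProduct.map (jH : H →ₗ[k] X) (jA : A →ₗ[k] X)

/-- α := (id_A ⊗ ε_H) ∘ ζ. -/
def alphaF (jA : A →ₐc[k] X) (jH : H →ₐc[k] X) (ξ : (A ⊗[k] H) ≃ₗ[k] X) :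
    H ⊗[k] A →ₗ[k] A :=
  (TensorProduct.rid k A).toLinearMap ∘ₗ
    TensorProduct.map LinearMap.id Coalgebra.counit ∘ₗ zetaF jA jH ξ

/-- β := (ε_A ⊗ id_H) ∘ ζ. -/
def betaF (jA : A →ₐc[k] X) (jH : H →ₐc[k] X) (ξ : (A ⊗[k] H) ≃ₗ[k] X) :
    H ⊗[k] A →ₗ[k] H :=
  (TensorProduct.lid k H).toLinearMap ∘ₗ
    TensorProduct.map Coalgebra.counit LinearMap.id ∘ₗ zetaF jA jH ξ

/-!
Since `j_A`, `j_H` are coalgebra maps and multiplication of the bialgebra `X` is a coalgebra map,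
`ξ` is a bijective coalgebra map, so `ξ⁻¹`, `ζ` and hence `α = (id ⊗ ε) ∘ ζ` are coalgebra maps;
this is (iii) and (iv). For (i) and (ii) write `α(h ⊗ a) = π(j_H(h) j_A(a))` with
`π = (id ⊗ ε) ∘ ξ⁻¹ : X → A` (`counitProj`). Since `ξ` is right `H`-linear,
`π(x j_H(g)) = ε(g) π(x)`, and from this `α(h ⊗ π(x)) = π(j_H(h) x)`; associativity of `X` then
gives (i).
-/

open Coalgebra

section ModuleStructure

variable (jA : A →ₐc[k] X) (jH : H →ₐc[k] X) (ξ : (A ⊗[k] H) ≃ₗ[k] X)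

def counitProj : X →ₗ[k] A :=
  (TensorProduct.rid k A).toLinearMap ∘ₗ TensorProduct.map LinearMap.id counit ∘ₗ
    ξ.symm.toLinearMap

lemma counitProj_apply_tmul (a : A) (h : H) :
    counitProj ξ (ξ (a ⊗ₜ h)) = counit (R := k) h • a := by
  simp [counitProj]

lemma alphaF_tmul (h : H) (a : A) :
    alphaF jA jH ξ (h ⊗ₜ a) = counitProj ξ (jH h * jA a) := by
  simp [alphaF, zetaF, counitProj]

variable {jA jH ξ} (hξ : ∀ (a : A) (h : H), ξ (a ⊗ₜ[k] h) = jA a * jH h)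
include hξ

lemma counitProj_jA (a : A) : counitProj ξ (jA a) = a := by
  simpa [hξ] using counitProj_apply_tmul ξ a (1 : H)

lemma counitProj_mul_jH (x : X) (g : H) :
    counitProj ξ (x * jH g) = counit (R := k) g • counitProj ξ x := by
  obtain ⟨t, rfl⟩ := ξ.surjective x
  induction t using TensorProduct.induction_on with
  | zero => simp
  | tmul a h =>
    have hmul : ξ (a ⊗ₜ h) * jH g = ξ (a ⊗ₜ (h * g)) := by rw [hξ, hξ, map_mul, mul_assoc]
    rw [hmul, counitProj_apply_tmul, counitProj_apply_tmul, Bialgebra.counit_mul, mul_comm,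
      mul_smul]
  | add t u ht hu => simp only [map_add, add_mul, ht, hu, smul_add]

lemma alphaF_tmul_counitProj (h : H) (x : X) :
    alphaF jA jH ξ (h ⊗ₜ counitProj ξ x) = counitProj ξ (jH h * x) := by
  obtain ⟨t, rfl⟩ := ξ.surjective x
  induction t using TensorProduct.induction_on with
  | zero => simp
  | tmul a g =>
    rw [counitProj_apply_tmul, tmul_smul, map_smul, alphaF_tmul, hξ, ← mul_assoc,
      counitProj_mul_jH hξ]
  | add t u ht hu => simp only [map_add, tmul_add, mul_add, ht, hu]

end ModuleStructure

section CoalgebraStructure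

variable {jA : A →ₐc[k] X} {jH : H →ₐc[k] X} {ξ : (A ⊗[k] H) ≃ₗ[k] X}
  (hξ : ∀ (a : A) (h : H), ξ (a ⊗ₜ[k] h) = jA a * jH h)

include hξ in
lemma coe_mulCoalgHom_comp_map :
    ⇑((Bialgebra.mulCoalgHom k X).comp
      (Coalgebra.TensorProduct.map (jA : A →ₗc[k] X) (jH : H →ₗc[k] X))) = ξ := by
  ext t
  induction t using TensorProduct.induction_on with
  | zero => simp
  | tmul a h => simp [hξ]
  | add t u ht hu => simp only [map_add, ht, hu]

def xiCoalgEquiv : (A ⊗[k] H) ≃ₗc[k] X :=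
  CoalgEquiv.ofBijective (f := (Bialgebra.mulCoalgHom k X).comp
    (Coalgebra.TensorProduct.map (jA : A →ₗc[k] X) (jH : H →ₗc[k] X)))
    (by
      rw [coe_mulCoalgHom_comp_map hξ]
      exact ξ.bijective)

lemma xiCoalgEquiv_symm_apply (x : X) : (xiCoalgEquiv hξ).symm x = ξ.symm x := by
  apply ξ.injective
  rw [ξ.apply_symm_apply, ← coe_mulCoalgHom_comp_map hξ, ← CoalgEquiv.coe_ofBijective]
  exact (xiCoalgEquiv hξ).apply_symm_apply x

def alphaCoalgHom : H ⊗[k] A →ₗc[k] A :=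
  (Coalgebra.TensorProduct.rid k k A).toCoalgHom.comp <|
    (Coalgebra.TensorProduct.map (CoalgHom.id k A) (counitCoalgHom k H)).comp <|
      (xiCoalgEquiv hξ).symm.toCoalgHom.comp <|
        (Bialgebra.mulCoalgHom k X).comp
          (Coalgebra.TensorProduct.map (jH : H →ₗc[k] X) (jA : A →ₗc[k] X))

lemma alphaCoalgHom_toLinearMap :
    (alphaCoalgHom hξ : H ⊗[k] A →ₗ[k] A) = alphaF jA jH ξ := by
  ext t
  exact congrArg ((TensorProduct.rid k A).toLinearMap ∘ₗ TensorProduct.map LinearMap.id counit)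
    (xiCoalgEquiv_symm_apply hξ _)

end CoalgebraStructure

/-- (A, α) is an H-module coalgebra. -/
theorem alpha_module_coalgebra (jA : A →ₐc[k] X) (jH : H →ₐc[k] X)
    (ξ : (A ⊗[k] H) ≃ₗ[k] X)
    (hξ : ∀ (a : A) (h : H), ξ (a ⊗ₜ[k] h) = jA a * jH h) :
    ∀ (h h' : H) (a : A),
      alphaF jA jH ξ ((h * h') ⊗ₜ[k] a)
        = alphaF jA jH ξ (h ⊗ₜ[k] alphaF jA jH ξ (h' ⊗ₜ[k] a)) ∧
      alphaF jA jH ξ ((1 : H) ⊗ₜ[k] a) = a ∧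
      Coalgebra.counit (R := k) (alphaF jA jH ξ (h ⊗ₜ[k] a))
        = Coalgebra.counit (R := k) h * Coalgebra.counit (R := k) a ∧
      Coalgebra.comul (R := k) (alphaF jA jH ξ (h ⊗ₜ[k] a))
        = TensorProduct.map (alphaF jA jH ξ) (alphaF jA jH ξ)
            (Coalgebra.comul (R := k) (h ⊗ₜ[k] a)) := by
  intro h h' a
  refine ⟨?_, ?_, ?_, ?_⟩
  · rw [alphaF_tmul jA jH ξ h', alphaF_tmul_counitProj hξ, alphaF_tmul, map_mul jH, mul_assoc]
  · rw [alphaF_tmul, map_one, one_mul, counitProj_jA hξ]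
  · rw [← alphaCoalgHom_toLinearMap hξ]
    exact (CoalgHomClass.counit_comp_apply (alphaCoalgHom hξ) _).trans (mul_comm _ _)
  · rw [← alphaCoalgHom_toLinearMap hξ]
    exact (CoalgHomClass.map_comp_comul_apply (alphaCoalgHom hξ) _).symm
end
end

section
/- The maps α and β satisfy the matched-pair compatibility conditions for α: for all h ∈ H and a, a' ∈ A, α(h ⊗ 1_A) = ε_H(h)·1_A and α(h ⊗ a a') = Σ α(h₁ ⊗ a₁)·α(β(h₂ ⊗ a₂) ⊗ a'). -/
open TensorProduct

set_option synthInstance.maxHeartbeats 1000000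
set_option maxHeartbeats 2000000

noncomputable section

universe u

variable {k A H X : Type u} [Field k]
  [Ring A] [Ring H] [Ring X]
  [Bialgebra k A] [Bialgebra k H] [Bialgebra k X]

lemma comul_tmul' {B C : Type u} [Ring B] [Ring C] [Bialgebra k B] [Bialgebra k C]
    (b : B) (c : C) :
    Coalgebra.comul (R := k) (b ⊗ₜ[k] c) =
      TensorProduct.tensorTensorTensorComm k B B C C
        (Coalgebra.comul (R := k) b ⊗ₜ[k] Coalgebra.comul (R := k) c) := by
  rw [Bialgebra.TensorProduct.comul_eq_algHom_toLinearMap]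
  simp [Algebra.TensorProduct.map_tmul, Bialgebra.comulAlgHom_apply]

lemma mul_map_ttt {B C : Type u} [Ring B] [Ring C] [Bialgebra k B] [Bialgebra k C]
    (f : B →ₐc[k] X) (g : C →ₐc[k] X) (u : B ⊗[k] B) (v : C ⊗[k] C) :
    (TensorProduct.map (f : B →ₗ[k] X) (f : B →ₗ[k] X) u) *
      (TensorProduct.map (g : C →ₗ[k] X) (g : C →ₗ[k] X) v) =
      TensorProduct.map
        (LinearMap.mul' k X ∘ₗ TensorProduct.map (f : B →ₗ[k] X) (g : C →ₗ[k] X))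
        (LinearMap.mul' k X ∘ₗ TensorProduct.map (f : B →ₗ[k] X) (g : C →ₗ[k] X))
        (TensorProduct.tensorTensorTensorComm k B B C C (u ⊗ₜ[k] v)) := by
  induction u with
  | zero => simp
  | tmul b₁ b₂ =>
    induction v with
    | zero => simp
    | tmul c₁ c₂ => simp [Algebra.TensorProduct.tmul_mul_tmul]
    | add v₁ v₂ h1 h2 => simp only [tmul_add, map_add, mul_add, h1, h2]
  | add u₁ u₂ h1 h2 => simp only [add_tmul, map_add, add_mul, h1, h2]

lemma comul_mul_map {B C : Type u} [Ring B] [Ring C] [Bialgebra k B] [Bialgebra k C]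
    (f : B →ₐc[k] X) (g : C →ₐc[k] X) :
    Coalgebra.comul (R := k) ∘ₗ
        (LinearMap.mul' k X ∘ₗ TensorProduct.map (f : B →ₗ[k] X) (g : C →ₗ[k] X)) =
      TensorProduct.map
        (LinearMap.mul' k X ∘ₗ TensorProduct.map (f : B →ₗ[k] X) (g : C →ₗ[k] X))
        (LinearMap.mul' k X ∘ₗ TensorProduct.map (f : B →ₗ[k] X) (g : C →ₗ[k] X)) ∘ₗ
        Coalgebra.comul (R := k) := by
  apply TensorProduct.ext'
  intro b c
  have h1 : TensorProduct.map (f : B →ₗ[k] X) (f : B →ₗ[k] X) (Coalgebra.comul (R := k) b)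
      = Coalgebra.comul (R := k) ((f : B →ₗ[k] X) b) :=
    CoalgHomClass.map_comp_comul_apply f b
  have h2 : TensorProduct.map (g : C →ₗ[k] X) (g : C →ₗ[k] X) (Coalgebra.comul (R := k) c)
      = Coalgebra.comul (R := k) ((g : C →ₗ[k] X) c) :=
    CoalgHomClass.map_comp_comul_apply g c
  rw [LinearMap.comp_apply, LinearMap.comp_apply, LinearMap.comp_apply,
    TensorProduct.map_tmul, LinearMap.mul'_apply, Bialgebra.comul_mul, ← h1, ← h2,
    mul_map_ttt, comul_tmul']

lemma map_counit_ttt (u : A ⊗[k] A) (v : H ⊗[k] H) :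
    TensorProduct.map
      ((TensorProduct.rid k A).toLinearMap ∘ₗ TensorProduct.map LinearMap.id Coalgebra.counit)
      ((TensorProduct.lid k H).toLinearMap ∘ₗ TensorProduct.map Coalgebra.counit LinearMap.id)
      (TensorProduct.tensorTensorTensorComm k A A H H (u ⊗ₜ[k] v)) =
      (TensorProduct.rid k A ((TensorProduct.map LinearMap.id Coalgebra.counit) u)) ⊗ₜ[k]
      (TensorProduct.lid k H ((TensorProduct.map Coalgebra.counit LinearMap.id) v)) := by
  induction u with
  | zero => simp
  | tmul a₁ a₂ =>
    induction v with
    | zero => simp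
    | tmul h₁ h₂ =>
      simp [TensorProduct.smul_tmul', TensorProduct.tmul_smul, smul_smul, mul_comm]
    | add v₁ v₂ hv1 hv2 => simp only [tmul_add, map_add, hv1, hv2]
  | add u₁ u₂ hu1 hu2 => simp only [add_tmul, map_add, hu1, hu2]

lemma counit_collapse :
    TensorProduct.map
      ((TensorProduct.rid k A).toLinearMap ∘ₗ TensorProduct.map LinearMap.id Coalgebra.counit)
      ((TensorProduct.lid k H).toLinearMap ∘ₗ TensorProduct.map Coalgebra.counit LinearMap.id) ∘ₗ
      Coalgebra.comul (R := k) (A := A ⊗[k] H) = LinearMap.id := by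
  apply TensorProduct.ext'
  intro a h
  rw [LinearMap.comp_apply, comul_tmul', map_counit_ttt,
    show (TensorProduct.map (LinearMap.id : A →ₗ[k] A) (Coalgebra.counit : A →ₗ[k] k))
      = LinearMap.lTensor A Coalgebra.counit from rfl,
    show (TensorProduct.map (Coalgebra.counit : H →ₗ[k] k) (LinearMap.id : H →ₗ[k] H))
      = LinearMap.rTensor H Coalgebra.counit from rfl,
    Coalgebra.lTensor_counit_comul, Coalgebra.rTensor_counit_comul]
  simp

lemma xi_eq (jA : A →ₐc[k] X) (jH : H →ₐc[k] X) (ξ : (A ⊗[k] H) ≃ₗ[k] X)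
    (hξ : ∀ (a : A) (h : H), ξ (a ⊗ₜ[k] h) = jA a * jH h) :
    ξ.toLinearMap = LinearMap.mul' k X ∘ₗ
      TensorProduct.map (jA : A →ₗ[k] X) (jH : H →ₗ[k] X) := by
  apply TensorProduct.ext'
  intro a h
  exact hξ a h

lemma xi_zeta (jA : A →ₐc[k] X) (jH : H →ₐc[k] X) (ξ : (A ⊗[k] H) ≃ₗ[k] X)
    (x : H ⊗[k] A) :
    ξ (zetaF jA jH ξ x) = (LinearMap.mul' k X)
      ((TensorProduct.map (jH : H →ₗ[k] X) (jA : A →ₗ[k] X)) x) := by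
  simp [zetaF]

lemma xi_zeta_tmul (jA : A →ₐc[k] X) (jH : H →ₐc[k] X) (ξ : (A ⊗[k] H) ≃ₗ[k] X)
    (h : H) (a : A) :
    ξ (zetaF jA jH ξ (h ⊗ₜ[k] a)) = jH h * jA a := by
  rw [xi_zeta]
  rfl

lemma zeta_comul (jA : A →ₐc[k] X) (jH : H →ₐc[k] X) (ξ : (A ⊗[k] H) ≃ₗ[k] X)
    (hξ : ∀ (a : A) (h : H), ξ (a ⊗ₜ[k] h) = jA a * jH h) :
    Coalgebra.comul (R := k) ∘ₗ zetaF jA jH ξ =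
      TensorProduct.map (zetaF jA jH ξ) (zetaF jA jH ξ) ∘ₗ Coalgebra.comul (R := k) := by
  have hxz : ξ.toLinearMap ∘ₗ zetaF jA jH ξ
      = LinearMap.mul' k X ∘ₗ TensorProduct.map (jH : H →ₗ[k] X) (jA : A →ₗ[k] X) :=
    LinearMap.ext fun x => xi_zeta jA jH ξ x
  have hAH : Coalgebra.comul (R := k) ∘ₗ ξ.toLinearMap =
      TensorProduct.map ξ.toLinearMap ξ.toLinearMap ∘ₗ Coalgebra.comul (R := k) := by
    rw [xi_eq jA jH ξ hξ]
    exact comul_mul_map jA jH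
  apply LinearMap.ext
  intro x
  apply (TensorProduct.congr ξ ξ).injective
  have hmap : ∀ y : (A ⊗[k] H) ⊗[k] (A ⊗[k] H),
      (TensorProduct.congr ξ ξ) y
        = TensorProduct.map ξ.toLinearMap ξ.toLinearMap y := fun y => rfl
  rw [hmap, hmap]
  have e1 := LinearMap.congr_fun hAH (zetaF jA jH ξ x)
  have e2 := LinearMap.congr_fun (comul_mul_map jH jA) x
  have e3 := LinearMap.congr_fun hxz x
  have e4 : TensorProduct.map ξ.toLinearMap ξ.toLinearMap ∘ₗ
      TensorProduct.map (zetaF jA jH ξ) (zetaF jA jH ξ)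
      = TensorProduct.map
        (LinearMap.mul' k X ∘ₗ TensorProduct.map (jH : H →ₗ[k] X) (jA : A →ₗ[k] X))
        (LinearMap.mul' k X ∘ₗ TensorProduct.map (jH : H →ₗ[k] X) (jA : A →ₗ[k] X)) := by
    rw [← TensorProduct.map_comp, hxz]
  have e4' := LinearMap.congr_fun e4 (Coalgebra.comul (R := k) x)
  simp only [LinearMap.comp_apply] at e1 e2 e3 e4' ⊢
  rw [← e1, e3, e2, e4']

lemma zeta_eq (jA : A →ₐc[k] X) (jH : H →ₐc[k] X) (ξ : (A ⊗[k] H) ≃ₗ[k] X)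
    (hξ : ∀ (a : A) (h : H), ξ (a ⊗ₜ[k] h) = jA a * jH h) :
    zetaF jA jH ξ = TensorProduct.map (alphaF jA jH ξ) (betaF jA jH ξ) ∘ₗ
      Coalgebra.comul (R := k) := by
  have hsplit : TensorProduct.map (alphaF jA jH ξ) (betaF jA jH ξ) =
      TensorProduct.map
        ((TensorProduct.rid k A).toLinearMap ∘ₗ TensorProduct.map LinearMap.id Coalgebra.counit)
        ((TensorProduct.lid k H).toLinearMap ∘ₗ TensorProduct.map Coalgebra.counit LinearMap.id)
        ∘ₗ TensorProduct.map (zetaF jA jH ξ) (zetaF jA jH ξ) := by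
    rw [← TensorProduct.map_comp]
    rfl
  rw [hsplit, LinearMap.comp_assoc, ← zeta_comul jA jH ξ hξ, ← LinearMap.comp_assoc,
    counit_collapse, LinearMap.id_comp]

/-- matched-pair compatibility conditions for α:
α(h ⊗ 1_A) = ε_H(h)·1_A and α(h ⊗ a a') = Σ α(h₁ ⊗ a₁)·α(β(h₂ ⊗ a₂) ⊗ a'),
where Σ (h₁ ⊗ a₁) ⊗ (h₂ ⊗ a₂) = Δ_{H⊗A}(h ⊗ a). -/
theorem alpha_matched_pair (jA : A →ₐc[k] X) (jH : H →ₐc[k] X)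
    (ξ : (A ⊗[k] H) ≃ₗ[k] X)
    (hξ : ∀ (a : A) (h : H), ξ (a ⊗ₜ[k] h) = jA a * jH h) :
    ∀ (h : H) (a a' : A),
      alphaF jA jH ξ (h ⊗ₜ[k] (1 : A)) = Coalgebra.counit (R := k) h • (1 : A) ∧
      alphaF jA jH ξ (h ⊗ₜ[k] (a * a'))
        = LinearMap.mul' k A
            (TensorProduct.map (alphaF jA jH ξ)
              (alphaF jA jH ξ ∘ₗ (TensorProduct.mk k H A).flip a' ∘ₗ betaF jA jH ξ)
              (Coalgebra.comul (R := k) (h ⊗ₜ[k] a))) := by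
  intro h a a'
  constructor
  · have hz1 : zetaF jA jH ξ (h ⊗ₜ[k] (1 : A)) = (1 : A) ⊗ₜ[k] h := by
      apply ξ.injective
      rw [xi_zeta_tmul jA jH ξ, hξ, map_one, one_mul, mul_one]
    show (TensorProduct.rid k A) ((TensorProduct.map LinearMap.id Coalgebra.counit)
      (zetaF jA jH ξ (h ⊗ₜ[k] (1 : A)))) = Coalgebra.counit (R := k) h • (1 : A)
    rw [hz1, TensorProduct.map_tmul, LinearMap.id_coe, id_eq, TensorProduct.rid_tmul]
  · have C3 : ∀ (b : A) (y : A ⊗[k] H),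
        ξ (LinearMap.rTensor H (LinearMap.mul' k A)
          ((TensorProduct.assoc k A A H).symm (b ⊗ₜ[k] y))) = jA b * ξ y := by
      intro b y
      induction y with
      | zero => simp
      | tmul c m =>
        rw [TensorProduct.assoc_symm_tmul, LinearMap.rTensor_tmul, LinearMap.mul'_apply,
          hξ, hξ, map_mul, mul_assoc]
      | add y1 y2 e1 e2 => simp only [tmul_add, map_add, mul_add, e1, e2]
    set G : A ⊗[k] H →ₗ[k] A ⊗[k] H :=
      LinearMap.rTensor H (LinearMap.mul' k A) ∘ₗ
        (TensorProduct.assoc k A A H).symm.toLinearMap ∘ₗ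
        LinearMap.lTensor A (zetaF jA jH ξ ∘ₗ (TensorProduct.mk k H A).flip a') with hG
    have C2 : ∀ x : A ⊗[k] H, ξ (G x) = ξ x * jA a' := by
      intro x
      induction x with
      | zero => simp
      | tmul b g =>
        rw [hG]
        simp only [LinearMap.comp_apply, LinearMap.lTensor_tmul, LinearEquiv.coe_coe,
          LinearMap.flip_apply, TensorProduct.mk_apply]
        rw [C3, xi_zeta_tmul, hξ, mul_assoc]
      | add y1 y2 e1 e2 => simp only [map_add, add_mul, e1, e2]
    have hSA : zetaF jA jH ξ (h ⊗ₜ[k] (a * a')) = G (zetaF jA jH ξ (h ⊗ₜ[k] a)) := by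
      apply ξ.injective
      rw [xi_zeta_tmul, C2, xi_zeta_tmul, map_mul, mul_assoc]
    have C4 : ∀ (b : A) (y : A ⊗[k] H),
        (TensorProduct.rid k A) ((TensorProduct.map LinearMap.id Coalgebra.counit)
          (LinearMap.rTensor H (LinearMap.mul' k A)
            ((TensorProduct.assoc k A A H).symm (b ⊗ₜ[k] y))))
        = b * (TensorProduct.rid k A)
            ((TensorProduct.map LinearMap.id Coalgebra.counit) y) := by
      intro b y
      induction y with
      | zero => simp
      | tmul c m =>
        rw [TensorProduct.assoc_symm_tmul, LinearMap.rTensor_tmul, LinearMap.mul'_apply]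
        simp [mul_smul_comm]
      | add y1 y2 e1 e2 => simp only [tmul_add, map_add, mul_add, e1, e2]
    have hSB : ∀ x : A ⊗[k] H,
        (TensorProduct.rid k A) ((TensorProduct.map LinearMap.id Coalgebra.counit) (G x)) =
          LinearMap.mul' k A ((TensorProduct.map LinearMap.id
            (alphaF jA jH ξ ∘ₗ (TensorProduct.mk k H A).flip a')) x) := by
      intro x
      induction x with
      | zero => simp
      | tmul b g =>
        rw [hG]
        simp only [LinearMap.comp_apply, LinearMap.lTensor_tmul, LinearEquiv.coe_coe]
        rw [C4]
        simp only [TensorProduct.map_tmul, LinearMap.mul'_apply, LinearMap.id_coe, id_eq,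
          LinearMap.comp_apply]
        rfl
      | add y1 y2 e1 e2 => simp only [map_add, e1, e2]
    have e5 : TensorProduct.map (LinearMap.id : A →ₗ[k] A)
          (alphaF jA jH ξ ∘ₗ (TensorProduct.mk k H A).flip a') ∘ₗ
          TensorProduct.map (alphaF jA jH ξ) (betaF jA jH ξ)
        = TensorProduct.map (alphaF jA jH ξ)
            (alphaF jA jH ξ ∘ₗ (TensorProduct.mk k H A).flip a' ∘ₗ betaF jA jH ξ) := by
      rw [← TensorProduct.map_comp, LinearMap.id_comp, LinearMap.comp_assoc]
    calc alphaF jA jH ξ (h ⊗ₜ[k] (a * a'))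
        = (TensorProduct.rid k A) ((TensorProduct.map LinearMap.id Coalgebra.counit)
            (zetaF jA jH ξ (h ⊗ₜ[k] (a * a')))) := rfl
      _ = (TensorProduct.rid k A) ((TensorProduct.map LinearMap.id Coalgebra.counit)
            (G (zetaF jA jH ξ (h ⊗ₜ[k] a)))) := by rw [hSA]
      _ = LinearMap.mul' k A ((TensorProduct.map LinearMap.id
            (alphaF jA jH ξ ∘ₗ (TensorProduct.mk k H A).flip a'))
            (zetaF jA jH ξ (h ⊗ₜ[k] a))) := hSB _
      _ = LinearMap.mul' k A
            (TensorProduct.map (alphaF jA jH ξ)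
              (alphaF jA jH ξ ∘ₗ (TensorProduct.mk k H A).flip a' ∘ₗ betaF jA jH ξ)
              (Coalgebra.comul (R := k) (h ⊗ₜ[k] a))) := by
          have e5' := LinearMap.congr_fun e5 (Coalgebra.comul (R := k) (h ⊗ₜ[k] a))
          simp only [LinearMap.comp_apply] at e5'
          rw [zeta_eq jA jH ξ hξ, LinearMap.comp_apply, e5']
end
end

section
/- The map ζ is recovered from α and β, and the product in X recombines accordingly: for all h ∈ H and a ∈ A, ζ(h ⊗ a) = Σ α(h₁ ⊗ a₁) ⊗ β(h₂ ⊗ a₂) in A ⊗ H, and consequently j_H(h)·j_A(a) = Σ j_A(α(h₁ ⊗ a₁))·j_H(β(h₂ ⊗ a₂)) in X. -/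
/-!
Both `j_A ⊗ j_H` followed by multiplication (which is `ξ`) and `j_H ⊗ j_A` followed by
multiplication are coalgebra morphisms, since multiplication `X ⊗ X → X` is one. Hence
`ζ = ξ⁻¹ ∘ μ ∘ (j_H ⊗ j_A)` is a coalgebra morphism into `A ⊗ H`, and any coalgebra
morphism `f` into a tensor product `M ⊗ N` is recovered from its two counital projections
as `f(c) = Σ (id ⊗ ε) f(c₁) ⊗ (ε ⊗ id) f(c₂)`, by the counit axioms of `M ⊗ N`.
Applying `ξ` to this identity gives the formula in `X`.
-/

open TensorProduct

noncomputable section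

universe u

variable {k A H X : Type u} [Field k]
  [Ring A] [Ring H] [Ring X]
  [Bialgebra k A] [Bialgebra k H] [Bialgebra k X]

open Coalgebra

section TensorProjections

variable {R C M N : Type*} [CommSemiring R] [AddCommMonoid C] [AddCommMonoid M]
  [AddCommMonoid N] [Module R C] [Module R M] [Module R N] [Coalgebra R M] [Coalgebra R N]

local notation "π₁" =>
  LinearEquiv.toLinearMap (TensorProduct.rid R M) ∘ₗ map LinearMap.id counit
local notation "π₂" =>
  LinearEquiv.toLinearMap (TensorProduct.lid R N) ∘ₗ map counit LinearMap.id

theorem TensorProduct.map_counit_comp_comul :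
    map π₁ π₂ ∘ₗ comul (R := R) (A := M ⊗[R] N) = LinearMap.id := by
  have hM : π₁ ∘ₗ comul (R := R) (A := M) = LinearMap.id := by
    ext m
    simp [← LinearMap.lTensor_def]
  have hN : π₂ ∘ₗ comul (R := R) (A := N) = LinearMap.id := by
    ext n
    simp [← LinearMap.rTensor_def]
  have hcomm : map π₁ π₂ ∘ₗ (TensorProduct.tensorTensorTensorComm R M M N N).toLinearMap =
      map π₁ π₂ := by
    ext m m' n n'
    simp [smul_tmul', tmul_smul, smul_comm (counit (R := R) n)]
  rw [TensorProduct.comul_def, AlgebraTensorModule.tensorTensorTensorComm_eq,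
    AlgebraTensorModule.map_eq, ← LinearMap.comp_assoc, hcomm, ← map_comp, hM, hN,
    map_id]

theorem CoalgHom.map_counit_comp_comul [CoalgebraStruct R C]
    (f : C →ₗc[R] M ⊗[R] N) :
    map (π₁ ∘ₗ (f : C →ₗ[R] M ⊗[R] N)) (π₂ ∘ₗ (f : C →ₗ[R] M ⊗[R] N)) ∘ₗ comul =
      (f : C →ₗ[R] M ⊗[R] N) := by
  rw [map_comp, LinearMap.comp_assoc, CoalgHomClass.map_comp_comul f,
    ← LinearMap.comp_assoc, TensorProduct.map_counit_comp_comul, LinearMap.id_comp]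

end TensorProjections

def CoalgEquiv.ofLinearEquiv {R M N : Type*} [CommSemiring R] [AddCommMonoid M]
    [AddCommMonoid N] [Module R M] [Module R N] [CoalgebraStruct R M] [CoalgebraStruct R N]
    (e : M ≃ₗ[R] N) (f : M →ₗc[R] N) (h : (f : M →ₗ[R] N) = e) : M ≃ₗc[R] N where
  toCoalgHom := f
  invFun := e.symm
  left_inv m := by simpa using congr_arg e.symm (LinearMap.congr_fun h m)
  right_inv n := by simpa using LinearMap.congr_fun h (e.symm n)

theorem Bialgebra.mulCoalgHom_comp_map_eq {R A H X : Type*} [CommSemiring R]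
    [AddCommMonoid A] [AddCommMonoid H] [Module R A] [Module R H] [Coalgebra R A]
    [Coalgebra R H] [Semiring X] [Bialgebra R X]
    {jA : A →ₗc[R] X} {jH : H →ₗc[R] X} {ξ : A ⊗[R] H ≃ₗ[R] X}
    (hξ : ∀ (a : A) (h : H), ξ (a ⊗ₜ[R] h) = jA a * jH h) :
    ((Bialgebra.mulCoalgHom R X).comp (Coalgebra.TensorProduct.map jA jH) :
      A ⊗[R] H →ₗ[R] X) = ξ :=
  TensorProduct.ext' fun a h => (hξ a h).symm

-- Its underlying linear map is `zetaF jA jH ξ` by `rfl`.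
def zetaCoalgHom {jA : A →ₐc[k] X} {jH : H →ₐc[k] X} {ξ : (A ⊗[k] H) ≃ₗ[k] X}
    (hξ : ∀ (a : A) (h : H), ξ (a ⊗ₜ[k] h) = jA a * jH h) :
    H ⊗[k] A →ₗc[k] A ⊗[k] H :=
  let ξc : A ⊗[k] H ≃ₗc[k] X := CoalgEquiv.ofLinearEquiv ξ
    ((Bialgebra.mulCoalgHom k X).comp (Coalgebra.TensorProduct.map jA jH))
    (Bialgebra.mulCoalgHom_comp_map_eq hξ)
  (ξc.symm : X →ₗc[k] A ⊗[k] H).comp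
    ((Bialgebra.mulCoalgHom k X).comp (Coalgebra.TensorProduct.map jH jA))

/-- ζ is recovered from α and β:
ζ(h ⊗ a) = Σ α(h₁ ⊗ a₁) ⊗ β(h₂ ⊗ a₂), and consequently
j_H(h)·j_A(a) = Σ j_A(α(h₁ ⊗ a₁))·j_H(β(h₂ ⊗ a₂)) in X. -/
theorem zeta_eq_alpha_beta (jA : A →ₐc[k] X) (jH : H →ₐc[k] X)
    (ξ : (A ⊗[k] H) ≃ₗ[k] X)
    (hξ : ∀ (a : A) (h : H), ξ (a ⊗ₜ[k] h) = jA a * jH h) :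
    ∀ (h : H) (a : A),
      zetaF jA jH ξ (h ⊗ₜ[k] a)
        = TensorProduct.map (alphaF jA jH ξ) (betaF jA jH ξ)
            (Coalgebra.comul (R := k) (h ⊗ₜ[k] a)) ∧
      jH h * jA a
        = LinearMap.mul' k X
            (TensorProduct.map
              ((jA : A →ₗ[k] X) ∘ₗ alphaF jA jH ξ)
              ((jH : H →ₗ[k] X) ∘ₗ betaF jA jH ξ)
              (Coalgebra.comul (R := k) (h ⊗ₜ[k] a))) := by
  intro h a
  have hζ : zetaF jA jH ξ (h ⊗ₜ[k] a)
      = TensorProduct.map (alphaF jA jH ξ) (betaF jA jH ξ) (comul (h ⊗ₜ[k] a)) :=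
    (LinearMap.congr_fun (CoalgHom.map_counit_comp_comul (zetaCoalgHom hξ)) _).symm
  refine ⟨hζ, ?_⟩
  calc jH h * jA a = ξ (zetaF jA jH ξ (h ⊗ₜ[k] a)) := by simp [zetaF]
    _ = LinearMap.mul' k X (TensorProduct.map (jA : A →ₗ[k] X) (jH : H →ₗ[k] X)
          (zetaF jA jH ξ (h ⊗ₜ[k] a))) :=
      (LinearMap.congr_fun (Bialgebra.mulCoalgHom_comp_map_eq hξ) _).symm
    _ = _ := by rw [hζ, map_comp, LinearMap.comp_apply]
end
end
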